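/- Let u be a classical solution of the forward problem, and write ‖F‖² := ∫₀^T ∫₀^ℓ F(x,t)² dx dt. Then for every t ∈ [0,T], ∫₀^t ∫₀^ℓ (∂ₜu(x,τ))² dx dτ ≤ (exp(t/ρ₀) − 1) ‖F‖². In particular, ∫₀^T ∫₀^ℓ (∂ₜu)² dx dt ≤ (C_e² − 1) ‖F‖², where C_e² := exp(T/ρ₀). -/

import Mathlib

/-!
Energy method. Multiplying the equation by `uₜ`, the contributions of `(T_r uₓ)ₓ` and of the
bending moment `B = r uₓₓ + κ uₓₓₜ` combine with the time derivatives of the strain energies into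
`∂ₓ` of the flux `uₜ T_r uₓ − uₜ Bₓ + uₓₜ B`, which vanishes at the simply supported ends
(`uₜ = B = 0` there; identifying `∂ₓ uₜ = uₓₜ` and `∂ₓ uₓₜ = uₓₓₜ` is Schwarz's theorem). So the
energy `E = ∫ ρ_A uₜ² + T_r uₓ² + r uₓₓ²` satisfies
`E' = 2∫ uₜ F − 2∫ μ uₜ² − 2∫ κ uₓₓₜ² ≤ ∫ F² + ∫ uₜ² ≤ ∫ F² + E / ρ₀` with `E(0) = 0`.
Grönwall gives `ρ₀ ∫ uₜ(·, τ)² ≤ E(τ) ≤ exp (τ / ρ₀) ‖F‖²`, and integrating in `τ` gives the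
estimate.
-/

open Set

/-- A classical solution of the forward problem for the damped Euler–Bernoulli beam
equation `ρ_A(x) uₜₜ + μ(x) uₜ − (T_r(x) uₓ)ₓ + (r(x) uₓₓ + κ(x) uₓₓₜ)ₓₓ = F(x,t)` on
`(0,ℓ) × (0,T)`, with homogeneous initial conditions and simply supported boundary
conditions.  The fields `ux, uxx, ut, utt, uxt, uxxt` are the partial derivatives of
`u`, `Ax` is the spatial derivative of `T_r(x) uₓ`, and `Bx, Bxx` are the first and
second spatial derivatives of the bending moment `B(x,t) = r(x) uₓₓ + κ(x) uₓₓₜ`. -/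
structure ForwardSol (ℓ T : ℝ) (ρA μ Tr r κ : ℝ → ℝ) (F : ℝ → ℝ → ℝ) where
  u : ℝ → ℝ → ℝ
  ux : ℝ → ℝ → ℝ
  uxx : ℝ → ℝ → ℝ
  ut : ℝ → ℝ → ℝ
  utt : ℝ → ℝ → ℝ
  uxt : ℝ → ℝ → ℝ
  uxxt : ℝ → ℝ → ℝ
  Ax : ℝ → ℝ → ℝ
  Bx : ℝ → ℝ → ℝ
  Bxx : ℝ → ℝ → ℝ
  smooth : ContDiffOn ℝ (⊤ : ℕ∞) (fun p : ℝ × ℝ => u p.1 p.2) (Icc 0 ℓ ×ˢ Icc 0 T)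
  hux : ∀ x ∈ Icc (0:ℝ) ℓ, ∀ t ∈ Icc (0:ℝ) T, HasDerivAt (fun y => u y t) (ux x t) x
  huxx : ∀ x ∈ Icc (0:ℝ) ℓ, ∀ t ∈ Icc (0:ℝ) T, HasDerivAt (fun y => ux y t) (uxx x t) x
  hut : ∀ x ∈ Icc (0:ℝ) ℓ, ∀ t ∈ Icc (0:ℝ) T, HasDerivAt (fun s => u x s) (ut x t) t
  hutt : ∀ x ∈ Icc (0:ℝ) ℓ, ∀ t ∈ Icc (0:ℝ) T, HasDerivAt (fun s => ut x s) (utt x t) t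
  huxt : ∀ x ∈ Icc (0:ℝ) ℓ, ∀ t ∈ Icc (0:ℝ) T, HasDerivAt (fun s => ux x s) (uxt x t) t
  huxxt : ∀ x ∈ Icc (0:ℝ) ℓ, ∀ t ∈ Icc (0:ℝ) T, HasDerivAt (fun s => uxx x s) (uxxt x t) t
  hAx : ∀ x ∈ Icc (0:ℝ) ℓ, ∀ t ∈ Icc (0:ℝ) T,
    HasDerivAt (fun y => Tr y * ux y t) (Ax x t) x
  hBx : ∀ x ∈ Icc (0:ℝ) ℓ, ∀ t ∈ Icc (0:ℝ) T,
    HasDerivAt (fun y => r y * uxx y t + κ y * uxxt y t) (Bx x t) x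
  hBxx : ∀ x ∈ Icc (0:ℝ) ℓ, ∀ t ∈ Icc (0:ℝ) T, HasDerivAt (fun y => Bx y t) (Bxx x t) x
  cont_ux : ContinuousOn (fun p : ℝ × ℝ => ux p.1 p.2) (Icc 0 ℓ ×ˢ Icc 0 T)
  cont_uxx : ContinuousOn (fun p : ℝ × ℝ => uxx p.1 p.2) (Icc 0 ℓ ×ˢ Icc 0 T)
  cont_ut : ContinuousOn (fun p : ℝ × ℝ => ut p.1 p.2) (Icc 0 ℓ ×ˢ Icc 0 T)
  cont_utt : ContinuousOn (fun p : ℝ × ℝ => utt p.1 p.2) (Icc 0 ℓ ×ˢ Icc 0 T)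
  cont_uxt : ContinuousOn (fun p : ℝ × ℝ => uxt p.1 p.2) (Icc 0 ℓ ×ˢ Icc 0 T)
  cont_uxxt : ContinuousOn (fun p : ℝ × ℝ => uxxt p.1 p.2) (Icc 0 ℓ ×ˢ Icc 0 T)
  cont_Ax : ContinuousOn (fun p : ℝ × ℝ => Ax p.1 p.2) (Icc 0 ℓ ×ˢ Icc 0 T)
  cont_Bx : ContinuousOn (fun p : ℝ × ℝ => Bx p.1 p.2) (Icc 0 ℓ ×ˢ Icc 0 T)
  cont_Bxx : ContinuousOn (fun p : ℝ × ℝ => Bxx p.1 p.2) (Icc 0 ℓ ×ˢ Icc 0 T)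
  pde : ∀ x ∈ Ioo (0:ℝ) ℓ, ∀ t ∈ Ioo (0:ℝ) T,
    ρA x * utt x t + μ x * ut x t - Ax x t + Bxx x t = F x t
  init_u : ∀ x ∈ Ioo (0:ℝ) ℓ, u x 0 = 0
  init_ut : ∀ x ∈ Ioo (0:ℝ) ℓ, ut x 0 = 0
  bc_u0 : ∀ t ∈ Icc (0:ℝ) T, u 0 t = 0
  bc_ul : ∀ t ∈ Icc (0:ℝ) T, u ℓ t = 0
  bc_m0 : ∀ t ∈ Icc (0:ℝ) T, r 0 * uxx 0 t + κ 0 * uxxt 0 t = 0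
  bc_ml : ∀ t ∈ Icc (0:ℝ) T, r ℓ * uxx ℓ t + κ ℓ * uxxt ℓ t = 0

open Filter Topology MeasureTheory Function Real

section PartialDerivatives

variable {E : Type*} [NormedAddCommGroup E] [NormedSpace ℝ E]

theorem HasFDerivAt.hasDerivAt_comp_mk_left {f : ℝ × ℝ → E} {f' : ℝ × ℝ →L[ℝ] E} {x t : ℝ}
    (h : HasFDerivAt f f' (x, t)) : HasDerivAt (fun y => f (y, t)) (f' (1, 0)) x :=
  h.comp_hasDerivAt_of_eq x ((hasDerivAt_id x).prodMk (hasDerivAt_const x t)) rfl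

theorem HasFDerivAt.hasDerivAt_comp_mk_right {f : ℝ × ℝ → E} {f' : ℝ × ℝ →L[ℝ] E} {x t : ℝ}
    (h : HasFDerivAt f f' (x, t)) : HasDerivAt (fun s => f (x, s)) (f' (0, 1)) t :=
  h.comp_hasDerivAt_of_eq t ((hasDerivAt_const t x).prodMk (hasDerivAt_id t)) rfl

theorem ContDiffAt.eventually_hasFDerivAt {f : ℝ × ℝ → E} {p : ℝ × ℝ} {n : WithTop ℕ∞}
    (hf : ContDiffAt ℝ n f p) (hn : 1 ≤ n) : ∀ᶠ q in 𝓝 p, HasFDerivAt f (fderiv ℝ f q) q := by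
  filter_upwards [(hf.of_le hn).eventually (by simp)] with q hq
  exact (hq.differentiableAt one_ne_zero).hasFDerivAt

theorem contDiffAt_uncurry_of_hasDerivAt_fst {f fx : ℝ → ℝ → E} {p : ℝ × ℝ}
    {m n : WithTop ℕ∞} (hf : ContDiffAt ℝ n (uncurry f) p) (hmn : m + 1 ≤ n)
    (hfx : ∀ᶠ q in 𝓝 p, HasDerivAt (fun y => f y q.2) (fx q.1 q.2) q.1) :
    ContDiffAt ℝ m (uncurry fx) p := by
  refine ((hf.fderiv_right hmn).clm_apply (contDiffAt_const (c := ((1 : ℝ), (0 : ℝ)))))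
    |>.congr_of_eventuallyEq ?_
  filter_upwards [hfx, hf.eventually_hasFDerivAt (le_add_self.trans hmn)] with q hfxq hfq
  exact hfxq.unique hfq.hasDerivAt_comp_mk_left

theorem ContDiffAt.hasDerivAt_partial_comm {f fx ft : ℝ → ℝ → E} {x t : ℝ} {fxt : E}
    (hf : ContDiffAt ℝ 2 (uncurry f) (x, t))
    (hfx : ∀ᶠ q in 𝓝 (x, t), HasDerivAt (fun y => f y q.2) (fx q.1 q.2) q.1)
    (hft : ∀ᶠ q in 𝓝 (x, t), HasDerivAt (f q.1) (ft q.1 q.2) q.2)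
    (hfxt : HasDerivAt (fx x) fxt t) :
    HasDerivAt (fun y => ft y t) fxt x := by
  set D := fderiv ℝ (uncurry f)
  have hD : HasFDerivAt D (fderiv ℝ D (x, t)) (x, t) :=
    ((hf.fderiv_right (m := 1) le_rfl).differentiableAt one_ne_zero).hasFDerivAt
  have hDv (v : ℝ × ℝ) : HasFDerivAt (fun q => D q v) ((fderiv ℝ D (x, t)).flip v) (x, t) :=
    (ContinuousLinearMap.apply ℝ E v).hasFDerivAt.comp (x, t) hD
  have hdiff := hf.eventually_hasFDerivAt one_le_two
  have hfx_eq : ∀ᶠ s in 𝓝 t, fx x s = D (x, s) (1, 0) := by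
    filter_upwards [(Continuous.prodMk_right x).tendsto t |>.eventually (hfx.and hdiff)]
      with s ⟨hfxs, hfs⟩
    exact hfxs.unique hfs.hasDerivAt_comp_mk_left
  have hft_eq : ∀ᶠ y in 𝓝 x, ft y t = D (y, t) (0, 1) := by
    filter_upwards [(Continuous.prodMk_left t).tendsto x |>.eventually (hft.and hdiff)]
      with y ⟨hfty, hfy⟩
    exact hfty.unique hfy.hasDerivAt_comp_mk_right
  have h_t := ((hDv (1, 0)).hasDerivAt_comp_mk_right).congr_of_eventuallyEq hfx_eq
  have h_x := ((hDv (0, 1)).hasDerivAt_comp_mk_left).congr_of_eventuallyEq hft_eq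
  rw [hfxt.unique h_t]
  convert h_x using 1
  exact hf.isSymmSndFDerivAt (by simp) (0, 1) (1, 0)

end PartialDerivatives

section ParametricIntegral

variable {E : Type*} [NormedAddCommGroup E] [NormedSpace ℝ E] {G G' : ℝ → ℝ → E} {a b c d : ℝ}

theorem ContinuousOn.continuousOn_intervalIntegral_of_prod (hab : a ≤ b)
    (hG : ContinuousOn (uncurry G) (Icc a b ×ˢ Icc c d)) :
    ContinuousOn (fun s => ∫ x in a..b, G x s) (Icc c d) := by
  obtain ⟨C, hC⟩ := (isCompact_Icc.prod isCompact_Icc).exists_bound_of_continuousOn hG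
  intro s₀ hs₀
  refine intervalIntegral.continuousWithinAt_of_dominated_interval (bound := fun _ => C)
    ?_ ?_ intervalIntegrable_const ?_
  · filter_upwards [self_mem_nhdsWithin] with s hs
    exact ((hG.uncurry_right s hs).mono (uIoc_of_le hab ▸ Ioc_subset_Icc_self)).aestronglyMeasurable
      measurableSet_uIoc
  · filter_upwards [self_mem_nhdsWithin] with s hs
    refine .of_forall fun x hx => hC (x, s) ⟨?_, hs⟩
    exact Ioc_subset_Icc_self (uIoc_of_le hab ▸ hx)
  · refine .of_forall fun x hx => hG.uncurry_left x ?_ s₀ hs₀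
    exact Ioc_subset_Icc_self (uIoc_of_le hab ▸ hx)

theorem hasDerivAt_intervalIntegral_of_continuousOn_prod {t : ℝ} (hab : a ≤ b)
    (hG : ContinuousOn (uncurry G) (Icc a b ×ˢ Icc c d))
    (hG' : ContinuousOn (uncurry G') (Icc a b ×ˢ Icc c d))
    (hderiv : ∀ x ∈ Icc a b, ∀ s ∈ Ioo c d, HasDerivAt (G x) (G' x s) s) (ht : t ∈ Ioo c d) :
    HasDerivAt (fun s => ∫ x in a..b, G x s) (∫ x in a..b, G' x t) t := by
  obtain ⟨C, hC⟩ := (isCompact_Icc.prod isCompact_Icc).exists_bound_of_continuousOn hG'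
  have hIoc : uIoc a b ⊆ Icc a b := uIoc_of_le hab ▸ Ioc_subset_Icc_self
  have hslice {H : ℝ → ℝ → E} (hH : ContinuousOn (uncurry H) (Icc a b ×ˢ Icc c d)) {s : ℝ}
      (hs : s ∈ Ioo c d) : ContinuousOn (H · s) (Icc a b) :=
    hH.uncurry_right s (Ioo_subset_Icc_self hs)
  refine (intervalIntegral.hasDerivAt_integral_of_dominated_loc_of_deriv_le
    (F := fun s x => G x s) (F' := fun s x => G' x s) (bound := fun _ => C)
    (Ioo_mem_nhds ht.1 ht.2) ?_ ?_ ?_ ?_ intervalIntegrable_const ?_).2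
  · filter_upwards [Ioo_mem_nhds ht.1 ht.2] with s hs
    exact ((hslice hG hs).mono hIoc).aestronglyMeasurable measurableSet_uIoc
  · exact (hslice hG ht).intervalIntegrable_of_Icc hab
  · exact ((hslice hG' ht).mono hIoc).aestronglyMeasurable measurableSet_uIoc
  · exact .of_forall fun x hx s hs => hC (x, s) ⟨hIoc hx, Ioo_subset_Icc_self hs⟩
  · exact .of_forall fun x hx s hs => hderiv x (hIoc hx) s hs

end ParametricIntegral

/-- Grönwall: `s ↦ exp (-K s) * E s - ∫₀ˢ g` is antitone. -/
theorem le_exp_mul_add_integral_of_hasDerivAt_le {E E' g : ℝ → ℝ} {K T t : ℝ} (hK : 0 ≤ K)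
    (hE : ContinuousOn E (Icc 0 T)) (hE' : ∀ s ∈ Ioo 0 T, HasDerivAt E (E' s) s)
    (hg : ContinuousOn g (Icc 0 T)) (hg₀ : ∀ s ∈ Ioo 0 T, 0 ≤ g s)
    (hle : ∀ s ∈ Ioo 0 T, E' s ≤ K * E s + g s) (ht : t ∈ Icc 0 T) :
    E t ≤ exp (K * t) * (E 0 + ∫ s in 0..t, g s) := by
  have hT : 0 ≤ T := ht.1.trans ht.2
  set H : ℝ → ℝ := fun s => exp (-(K * s)) * E s - ∫ σ in 0..s, g σ
  have hH_cont : ContinuousOn H (Icc 0 T) := by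
    refine ((by fun_prop : Continuous fun s => exp (-(K * s))).continuousOn.mul hE).sub ?_
    rw [← uIcc_of_le hT] at hg ⊢
    exact intervalIntegral.continuousOn_primitive_interval hg.integrableOn_uIcc
  have hH' : ∀ s ∈ Ioo 0 T,
      HasDerivAt H (exp (-(K * s)) * (E' s - K * E s) - g s) s := by
    intro s hs
    have hprim : HasDerivAt (fun s => ∫ σ in 0..s, g σ) (g s) s :=
      intervalIntegral.integral_hasDerivAt_right
        ((hg.mono (Icc_subset_Icc_right hs.2.le)).intervalIntegrable_of_Icc hs.1.le)
        ((hg.mono Ioo_subset_Icc_self).stronglyMeasurableAtFilter isOpen_Ioo s hs)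
        (hg.continuousAt (Icc_mem_nhds hs.1 hs.2))
    refine (((((hasDerivAt_id' s).const_mul K).fun_neg.exp).fun_mul (hE' s hs)).fun_sub
      hprim).congr_deriv ?_
    ring
  have hH'_nonpos : ∀ s ∈ Ioo 0 T, exp (-(K * s)) * (E' s - K * E s) - g s ≤ 0 := by
    intro s hs
    have hexp : exp (-(K * s)) ≤ 1 := exp_le_one_iff.2 (by nlinarith [hs.1])
    nlinarith [exp_pos (-(K * s)), hle s hs, hg₀ s hs]
  have hanti : AntitoneOn H (Icc 0 T) := by
    refine antitoneOn_of_hasDerivWithinAt_nonpos (convex_Icc 0 T) hH_cont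
      (f' := fun s => exp (-(K * s)) * (E' s - K * E s) - g s)
      (fun s hs => ?_) (fun s hs => ?_)
    · rw [interior_Icc] at hs ⊢
      exact (hH' s hs).hasDerivWithinAt
    · rw [interior_Icc] at hs
      exact hH'_nonpos s hs
  have h := hanti ⟨le_rfl, hT⟩ ht ht.1
  simp only [H, mul_zero, neg_zero, exp_zero, one_mul, intervalIntegral.integral_same,
    sub_zero] at h
  calc E t = exp (K * t) * (exp (-(K * t)) * E t) := by
        rw [← mul_assoc, ← exp_add, add_neg_cancel, exp_zero, one_mul]
    _ ≤ exp (K * t) * (E 0 + ∫ s in 0..t, g s) := by gcongr; linarith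

theorem ContinuousOn.comp_fst {α β γ : Type*} [TopologicalSpace α] [TopologicalSpace β]
    [TopologicalSpace γ] {f : α → β} {s : Set α} (hf : ContinuousOn f s) (t : Set γ) :
    ContinuousOn (fun p : α × γ => f p.1) (s ×ˢ t) :=
  hf.comp continuousOn_fst fun _ hp => hp.1

theorem HasDerivAt.eq_zero_of_forall_Ioo {f : ℝ → ℝ} {f' a b x : ℝ} (hf : HasDerivAt f f' x)
    (hx : x ∈ Ioo a b) (h : ∀ y ∈ Ioo a b, f y = 0) : f' = 0 :=
  hf.unique <| (hasDerivAt_const x 0).congr_of_eventuallyEq <|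
    eventually_of_mem (Ioo_mem_nhds hx.1 hx.2) h

theorem eventually_nhds_of_forall_Icc {P : ℝ → ℝ → Prop} {a b c d : ℝ} {p : ℝ × ℝ}
    (hp : p ∈ Ioo a b ×ˢ Ioo c d) (h : ∀ x ∈ Icc a b, ∀ t ∈ Icc c d, P x t) :
    ∀ᶠ q in 𝓝 p, P q.1 q.2 := by
  filter_upwards [(isOpen_Ioo.prod isOpen_Ioo).mem_nhds hp] with q hq
  exact h _ (Ioo_subset_Icc_self hq.1) _ (Ioo_subset_Icc_self hq.2)

theorem integral_exp_div_div {ρ : ℝ} (hρ : ρ ≠ 0) (a b : ℝ) :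
    ∫ τ in a..b, exp (τ / ρ) / ρ = exp (b / ρ) - exp (a / ρ) := by
  rw [intervalIntegral.integral_div, intervalIntegral.integral_comp_div (fun x => exp x) hρ,
    integral_exp, smul_eq_mul]
  field_simp

namespace ForwardSol

variable {ℓ T : ℝ} {ρA μ Tr r κ : ℝ → ℝ} {F : ℝ → ℝ → ℝ} (sol : ForwardSol ℓ T ρA μ Tr r κ F)
  {x t ρ₀ : ℝ}

theorem contDiffAt_u {p : ℝ × ℝ} (hp : p ∈ Ioo 0 ℓ ×ˢ Ioo 0 T) :
    ContDiffAt ℝ (⊤ : ℕ∞) (uncurry sol.u) p :=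
  sol.smooth.contDiffAt <| prod_mem_nhds (Icc_mem_nhds hp.1.1 hp.1.2) (Icc_mem_nhds hp.2.1 hp.2.2)

theorem contDiffAt_ux {p : ℝ × ℝ} (hp : p ∈ Ioo 0 ℓ ×ˢ Ioo 0 T) :
    ContDiffAt ℝ (⊤ : ℕ∞) (uncurry sol.ux) p :=
  contDiffAt_uncurry_of_hasDerivAt_fst (sol.contDiffAt_u hp) (by exact_mod_cast le_top)
    (eventually_nhds_of_forall_Icc hp sol.hux)

theorem hasDerivAt_ut_x (hx : x ∈ Ioo 0 ℓ) (ht : t ∈ Ioo 0 T) :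
    HasDerivAt (sol.ut · t) (sol.uxt x t) x :=
  ((sol.contDiffAt_u ⟨hx, ht⟩).of_le (WithTop.coe_le_coe.2 le_top)).hasDerivAt_partial_comm
    (eventually_nhds_of_forall_Icc ⟨hx, ht⟩ sol.hux)
    (eventually_nhds_of_forall_Icc ⟨hx, ht⟩ sol.hut)
    (sol.huxt x (Ioo_subset_Icc_self hx) t (Ioo_subset_Icc_self ht))

theorem hasDerivAt_uxt_x (hx : x ∈ Ioo 0 ℓ) (ht : t ∈ Ioo 0 T) :
    HasDerivAt (sol.uxt · t) (sol.uxxt x t) x :=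
  ((sol.contDiffAt_ux ⟨hx, ht⟩).of_le (WithTop.coe_le_coe.2 le_top)).hasDerivAt_partial_comm
    (eventually_nhds_of_forall_Icc ⟨hx, ht⟩ sol.huxx)
    (eventually_nhds_of_forall_Icc ⟨hx, ht⟩ sol.huxt)
    (sol.huxxt x (Ioo_subset_Icc_self hx) t (Ioo_subset_Icc_self ht))

theorem ut_left_eq_zero (hℓ : 0 ≤ ℓ) (ht : t ∈ Ioo 0 T) : sol.ut 0 t = 0 :=
  (sol.hut 0 (left_mem_Icc.2 hℓ) t (Ioo_subset_Icc_self ht)).eq_zero_of_forall_Ioo ht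
    fun s hs => sol.bc_u0 s (Ioo_subset_Icc_self hs)

theorem ut_right_eq_zero (hℓ : 0 ≤ ℓ) (ht : t ∈ Ioo 0 T) : sol.ut ℓ t = 0 :=
  (sol.hut ℓ (right_mem_Icc.2 hℓ) t (Ioo_subset_Icc_self ht)).eq_zero_of_forall_Ioo ht
    fun s hs => sol.bc_ul s (Ioo_subset_Icc_self hs)

theorem ux_initial_eq_zero (hT : 0 ≤ T) (hx : x ∈ Ioo 0 ℓ) : sol.ux x 0 = 0 :=
  (sol.hux x (Ioo_subset_Icc_self hx) 0 (left_mem_Icc.2 hT)).eq_zero_of_forall_Ioo hx sol.init_u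

theorem uxx_initial_eq_zero (hT : 0 ≤ T) (hx : x ∈ Ioo 0 ℓ) : sol.uxx x 0 = 0 :=
  (sol.huxx x (Ioo_subset_Icc_self hx) 0 (left_mem_Icc.2 hT)).eq_zero_of_forall_Ioo hx
    fun _ hy => sol.ux_initial_eq_zero hT hy

noncomputable def energyDensity (x t : ℝ) : ℝ :=
  ρA x * sol.ut x t ^ 2 + Tr x * sol.ux x t ^ 2 + r x * sol.uxx x t ^ 2

noncomputable def energyDensityDeriv (x t : ℝ) : ℝ :=
  2 * (ρA x * sol.ut x t * sol.utt x t) + 2 * (Tr x * sol.ux x t * sol.uxt x t) +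
    2 * (r x * sol.uxx x t * sol.uxxt x t)

noncomputable def energy (t : ℝ) : ℝ := ∫ x in 0..ℓ, sol.energyDensity x t

noncomputable def flux (x t : ℝ) : ℝ :=
  sol.ut x t * (Tr x * sol.ux x t) - sol.ut x t * sol.Bx x t +
    sol.uxt x t * (r x * sol.uxx x t + κ x * sol.uxxt x t)

noncomputable def fluxDeriv (x t : ℝ) : ℝ :=
  sol.uxt x t * (Tr x * sol.ux x t) + sol.ut x t * sol.Ax x t - sol.ut x t * sol.Bxx x t +
    sol.uxxt x t * (r x * sol.uxx x t + κ x * sol.uxxt x t)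

theorem hasDerivAt_energyDensity (hx : x ∈ Icc 0 ℓ) (ht : t ∈ Icc 0 T) :
    HasDerivAt (sol.energyDensity x) (sol.energyDensityDeriv x t) t := by
  refine (((((sol.hutt x hx t ht).fun_pow 2).const_mul (ρA x)).fun_add
    (((sol.huxt x hx t ht).fun_pow 2).const_mul (Tr x))).fun_add
    (((sol.huxxt x hx t ht).fun_pow 2).const_mul (r x))).congr_deriv ?_
  simp only [energyDensityDeriv]
  ring

theorem hasDerivAt_flux (hx : x ∈ Ioo 0 ℓ) (ht : t ∈ Ioo 0 T) :
    HasDerivAt (sol.flux · t) (sol.fluxDeriv x t) x := by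
  have hx' := Ioo_subset_Icc_self hx
  have ht' := Ioo_subset_Icc_self ht
  refine ((((sol.hasDerivAt_ut_x hx ht).fun_mul (sol.hAx x hx' t ht')).fun_sub
    ((sol.hasDerivAt_ut_x hx ht).fun_mul (sol.hBxx x hx' t ht'))).fun_add
    ((sol.hasDerivAt_uxt_x hx ht).fun_mul (sol.hBx x hx' t ht'))).congr_deriv ?_
  simp only [fluxDeriv]
  ring

theorem energyDensityDeriv_eq (hx : x ∈ Ioo 0 ℓ) (ht : t ∈ Ioo 0 T) :
    sol.energyDensityDeriv x t = 2 * sol.ut x t * F x t - 2 * μ x * sol.ut x t ^ 2 -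
      2 * κ x * sol.uxxt x t ^ 2 + 2 * sol.fluxDeriv x t := by
  simp only [energyDensityDeriv, fluxDeriv]
  linear_combination 2 * sol.ut x t * sol.pde x hx t ht

theorem continuousOn_moment (ht : t ∈ Icc 0 T) :
    ContinuousOn (fun y => r y * sol.uxx y t + κ y * sol.uxxt y t) (Icc 0 ℓ) :=
  fun y hy => (sol.hBx y hy t ht).continuousAt.continuousWithinAt

theorem continuousOn_flux (hTr : ContinuousOn Tr (Icc 0 ℓ)) (ht : t ∈ Icc 0 T) :
    ContinuousOn (sol.flux · t) (Icc 0 ℓ) :=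
  (((sol.cont_ut.uncurry_right t ht).mul (hTr.mul (sol.cont_ux.uncurry_right t ht))).sub
    ((sol.cont_ut.uncurry_right t ht).mul (sol.cont_Bx.uncurry_right t ht))).add
    ((sol.cont_uxt.uncurry_right t ht).mul (sol.continuousOn_moment ht))

theorem continuousOn_fluxDeriv (hTr : ContinuousOn Tr (Icc 0 ℓ)) (ht : t ∈ Icc 0 T) :
    ContinuousOn (sol.fluxDeriv · t) (Icc 0 ℓ) :=
  ((((sol.cont_uxt.uncurry_right t ht).mul (hTr.mul (sol.cont_ux.uncurry_right t ht))).add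
    ((sol.cont_ut.uncurry_right t ht).mul (sol.cont_Ax.uncurry_right t ht))).sub
    ((sol.cont_ut.uncurry_right t ht).mul (sol.cont_Bxx.uncurry_right t ht))).add
    ((sol.cont_uxxt.uncurry_right t ht).mul (sol.continuousOn_moment ht))

/-- The flux vanishes at both ends: there `uₜ = 0` and the bending moment is zero. -/
theorem integral_fluxDeriv_eq_zero (hℓ : 0 ≤ ℓ) (hTr : ContinuousOn Tr (Icc 0 ℓ))
    (ht : t ∈ Ioo 0 T) : ∫ x in 0..ℓ, sol.fluxDeriv x t = 0 := by
  have ht' := Ioo_subset_Icc_self ht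
  rw [intervalIntegral.integral_eq_sub_of_hasDerivAt_of_le hℓ (sol.continuousOn_flux hTr ht')
    (fun x hx => sol.hasDerivAt_flux hx ht)
    ((sol.continuousOn_fluxDeriv hTr ht').intervalIntegrable_of_Icc hℓ)]
  simp [flux, sol.ut_left_eq_zero hℓ ht, sol.ut_right_eq_zero hℓ ht, sol.bc_m0 t ht',
    sol.bc_ml t ht']

theorem continuousOn_energyDensity (hρA : ContinuousOn ρA (Icc 0 ℓ))
    (hTr : ContinuousOn Tr (Icc 0 ℓ)) (hr : ContinuousOn r (Icc 0 ℓ)) :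
    ContinuousOn (uncurry sol.energyDensity) (Icc 0 ℓ ×ˢ Icc 0 T) :=
  (((hρA.comp_fst _).mul (sol.cont_ut.pow 2)).add ((hTr.comp_fst _).mul (sol.cont_ux.pow 2))).add
    ((hr.comp_fst _).mul (sol.cont_uxx.pow 2))

theorem continuousOn_energyDensityDeriv (hρA : ContinuousOn ρA (Icc 0 ℓ))
    (hTr : ContinuousOn Tr (Icc 0 ℓ)) (hr : ContinuousOn r (Icc 0 ℓ)) :
    ContinuousOn (uncurry sol.energyDensityDeriv) (Icc 0 ℓ ×ˢ Icc 0 T) :=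
  ((continuousOn_const.mul (((hρA.comp_fst _).mul sol.cont_ut).mul sol.cont_utt)).add
    (continuousOn_const.mul (((hTr.comp_fst _).mul sol.cont_ux).mul sol.cont_uxt))).add
    (continuousOn_const.mul (((hr.comp_fst _).mul sol.cont_uxx).mul sol.cont_uxxt))

theorem continuousOn_energy (hℓ : 0 ≤ ℓ) (hρA : ContinuousOn ρA (Icc 0 ℓ))
    (hTr : ContinuousOn Tr (Icc 0 ℓ)) (hr : ContinuousOn r (Icc 0 ℓ)) :
    ContinuousOn sol.energy (Icc 0 T) :=
  (sol.continuousOn_energyDensity hρA hTr hr).continuousOn_intervalIntegral_of_prod hℓ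

theorem hasDerivAt_energy (hℓ : 0 ≤ ℓ) (hρA : ContinuousOn ρA (Icc 0 ℓ))
    (hTr : ContinuousOn Tr (Icc 0 ℓ)) (hr : ContinuousOn r (Icc 0 ℓ)) (ht : t ∈ Ioo 0 T) :
    HasDerivAt sol.energy (∫ x in 0..ℓ, sol.energyDensityDeriv x t) t :=
  hasDerivAt_intervalIntegral_of_continuousOn_prod hℓ (sol.continuousOn_energyDensity hρA hTr hr)
    (sol.continuousOn_energyDensityDeriv hρA hTr hr)
    (fun _ hx _ hs => sol.hasDerivAt_energyDensity hx (Ioo_subset_Icc_self hs)) ht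

theorem energy_zero (hℓ : 0 ≤ ℓ) (hT : 0 ≤ T) : sol.energy 0 = 0 := by
  rw [energy, intervalIntegral.integral_congr_Ioo_of_le hℓ (g := fun _ => 0),
    intervalIntegral.integral_zero]
  intro x hx
  simp [energyDensity, sol.init_ut x hx, sol.ux_initial_eq_zero hT hx,
    sol.uxx_initial_eq_zero hT hx]

theorem mul_integral_ut_sq_le_energy (hℓ : 0 ≤ ℓ) (hρA : ContinuousOn ρA (Icc 0 ℓ))
    (hTr : ContinuousOn Tr (Icc 0 ℓ)) (hr : ContinuousOn r (Icc 0 ℓ))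
    (hρAb : ∀ x ∈ Icc 0 ℓ, ρ₀ ≤ ρA x) (hTrb : ∀ x ∈ Icc 0 ℓ, 0 ≤ Tr x)
    (hrb : ∀ x ∈ Icc 0 ℓ, 0 ≤ r x) (ht : t ∈ Icc 0 T) :
    ρ₀ * ∫ x in 0..ℓ, sol.ut x t ^ 2 ≤ sol.energy t := by
  rw [← intervalIntegral.integral_const_mul]
  refine intervalIntegral.integral_mono_on hℓ
    ((continuousOn_const.mul ((sol.cont_ut.uncurry_right t ht).pow 2)).intervalIntegrable_of_Icc hℓ)
    (((sol.continuousOn_energyDensity hρA hTr hr).uncurry_right t ht).intervalIntegrable_of_Icc hℓ)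
    fun x hx => ?_
  simp only [energyDensity]
  nlinarith [mul_le_mul_of_nonneg_right (hρAb x hx) (sq_nonneg (sol.ut x t)),
    mul_nonneg (hTrb x hx) (sq_nonneg (sol.ux x t)),
    mul_nonneg (hrb x hx) (sq_nonneg (sol.uxx x t))]

theorem integral_energyDensityDeriv_le (hℓ : 0 ≤ ℓ) (hρA : ContinuousOn ρA (Icc 0 ℓ))
    (hTr : ContinuousOn Tr (Icc 0 ℓ)) (hr : ContinuousOn r (Icc 0 ℓ))
    (hμb : ∀ x ∈ Icc 0 ℓ, 0 ≤ μ x) (hκb : ∀ x ∈ Icc 0 ℓ, 0 ≤ κ x)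
    (hF : ContinuousOn (fun p : ℝ × ℝ => F p.1 p.2) (Icc 0 ℓ ×ˢ Icc 0 T)) (ht : t ∈ Ioo 0 T) :
    ∫ x in 0..ℓ, sol.energyDensityDeriv x t ≤ ∫ x in 0..ℓ, (F x t ^ 2 + sol.ut x t ^ 2) := by
  have ht' := Ioo_subset_Icc_self ht
  have hrate : IntervalIntegrable (sol.energyDensityDeriv · t) volume 0 ℓ :=
    ((sol.continuousOn_energyDensityDeriv hρA hTr hr).uncurry_right t ht')
      |>.intervalIntegrable_of_Icc hℓ
  have hflux : IntervalIntegrable (fun x => 2 * sol.fluxDeriv x t) volume 0 ℓ :=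
    ((sol.continuousOn_fluxDeriv hTr ht').intervalIntegrable_of_Icc hℓ).const_mul 2
  calc ∫ x in 0..ℓ, sol.energyDensityDeriv x t
      = ∫ x in 0..ℓ, (sol.energyDensityDeriv x t - 2 * sol.fluxDeriv x t) := by
        rw [intervalIntegral.integral_sub hrate hflux, intervalIntegral.integral_const_mul,
          sol.integral_fluxDeriv_eq_zero hℓ hTr ht, mul_zero, sub_zero]
    _ ≤ ∫ x in 0..ℓ, (F x t ^ 2 + sol.ut x t ^ 2) := by
        refine intervalIntegral.integral_mono_on_of_le_Ioo hℓ (hrate.sub hflux)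
          ((((hF.uncurry_right t ht').pow 2).add ((sol.cont_ut.uncurry_right t ht').pow 2)
            ).intervalIntegrable_of_Icc hℓ) fun x hx => ?_
        rw [sol.energyDensityDeriv_eq hx ht]
        have hx' := Ioo_subset_Icc_self hx
        nlinarith [mul_nonneg (hμb x hx') (sq_nonneg (sol.ut x t)),
          mul_nonneg (hκb x hx') (sq_nonneg (sol.uxxt x t)), sq_nonneg (sol.ut x t - F x t)]

theorem energy_le (hℓ : 0 ≤ ℓ) (hρ₀ : 0 < ρ₀) (hρA : ContinuousOn ρA (Icc 0 ℓ))
    (hTr : ContinuousOn Tr (Icc 0 ℓ)) (hr : ContinuousOn r (Icc 0 ℓ))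
    (hρAb : ∀ x ∈ Icc 0 ℓ, ρ₀ ≤ ρA x) (hμb : ∀ x ∈ Icc 0 ℓ, 0 ≤ μ x)
    (hTrb : ∀ x ∈ Icc 0 ℓ, 0 ≤ Tr x) (hrb : ∀ x ∈ Icc 0 ℓ, 0 ≤ r x)
    (hκb : ∀ x ∈ Icc 0 ℓ, 0 ≤ κ x)
    (hF : ContinuousOn (fun p : ℝ × ℝ => F p.1 p.2) (Icc 0 ℓ ×ˢ Icc 0 T)) (ht : t ∈ Icc 0 T) :
    sol.energy t ≤ exp (t / ρ₀) * ∫ s in 0..T, ∫ x in 0..ℓ, F x s ^ 2 := by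
  have hT : 0 ≤ T := ht.1.trans ht.2
  have hload : ContinuousOn (fun s => ∫ x in 0..ℓ, F x s ^ 2) (Icc 0 T) :=
    (hF.pow 2).continuousOn_intervalIntegral_of_prod hℓ
  have hload₀ (s : ℝ) : 0 ≤ ∫ x in 0..ℓ, F x s ^ 2 :=
    intervalIntegral.integral_nonneg hℓ fun _ _ => sq_nonneg _
  have hrate : ∀ s ∈ Ioo 0 T, ∫ x in 0..ℓ, sol.energyDensityDeriv x s ≤
      ρ₀⁻¹ * sol.energy s + ∫ x in 0..ℓ, F x s ^ 2 := by
    intro s hs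
    have hs' := Ioo_subset_Icc_self hs
    have hkinetic := (le_inv_mul_iff₀ hρ₀).2 <|
      sol.mul_integral_ut_sq_le_energy hℓ hρA hTr hr hρAb hTrb hrb hs'
    calc _ ≤ _ := sol.integral_energyDensityDeriv_le hℓ hρA hTr hr hμb hκb hF hs
      _ = (∫ x in 0..ℓ, F x s ^ 2) + ∫ x in 0..ℓ, sol.ut x s ^ 2 :=
        intervalIntegral.integral_add
          (((hF.uncurry_right s hs').pow 2).intervalIntegrable_of_Icc hℓ)
          (((sol.cont_ut.uncurry_right s hs').pow 2).intervalIntegrable_of_Icc hℓ)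
      _ ≤ _ := by linarith
  calc sol.energy t ≤ exp (ρ₀⁻¹ * t) * (sol.energy 0 + ∫ s in 0..t, ∫ x in 0..ℓ, F x s ^ 2) :=
        le_exp_mul_add_integral_of_hasDerivAt_le (inv_nonneg.2 hρ₀.le)
          (sol.continuousOn_energy hℓ hρA hTr hr)
          (fun s hs => sol.hasDerivAt_energy hℓ hρA hTr hr hs)
          hload (fun s _ => hload₀ s) hrate ht
    _ ≤ exp (t / ρ₀) * ∫ s in 0..T, ∫ x in 0..ℓ, F x s ^ 2 := by
        rw [sol.energy_zero hℓ hT, zero_add, inv_mul_eq_div]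
        gcongr
        exact intervalIntegral.integral_mono_interval le_rfl ht.1 ht.2
          (.of_forall hload₀) (hload.intervalIntegrable_of_Icc hT)

theorem integral_ut_sq_le (hℓ : 0 ≤ ℓ) (hρ₀ : 0 < ρ₀) (hρA : ContinuousOn ρA (Icc 0 ℓ))
    (hTr : ContinuousOn Tr (Icc 0 ℓ)) (hr : ContinuousOn r (Icc 0 ℓ))
    (hρAb : ∀ x ∈ Icc 0 ℓ, ρ₀ ≤ ρA x) (hμb : ∀ x ∈ Icc 0 ℓ, 0 ≤ μ x)
    (hTrb : ∀ x ∈ Icc 0 ℓ, 0 ≤ Tr x) (hrb : ∀ x ∈ Icc 0 ℓ, 0 ≤ r x)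
    (hκb : ∀ x ∈ Icc 0 ℓ, 0 ≤ κ x)
    (hF : ContinuousOn (fun p : ℝ × ℝ => F p.1 p.2) (Icc 0 ℓ ×ˢ Icc 0 T)) (ht : t ∈ Icc 0 T) :
    ∫ x in 0..ℓ, sol.ut x t ^ 2 ≤ exp (t / ρ₀) / ρ₀ * ∫ s in 0..T, ∫ x in 0..ℓ, F x s ^ 2 := by
  rw [div_mul_eq_mul_div, le_div_iff₀ hρ₀, mul_comm]
  exact (sol.mul_integral_ut_sq_le_energy hℓ hρA hTr hr hρAb hTrb hrb ht).trans
    (sol.energy_le hℓ hρ₀ hρA hTr hr hρAb hμb hTrb hrb hκb hF ht)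

end ForwardSol

theorem velocity_L2_estimate_general
    (ℓ T ρ₀ r₀ κ₀ : ℝ) (hℓ : 0 < ℓ) (hT : 0 < T)
    (hρ₀ : 0 < ρ₀) (hr₀ : 0 < r₀) (hκ₀ : 0 < κ₀)
    (ρA μ Tr r κ : ℝ → ℝ) (F : ℝ → ℝ → ℝ)
    (hρA : ContDiffOn ℝ (⊤ : ℕ∞) ρA (Icc 0 ℓ))
    (hTr : ContDiffOn ℝ (⊤ : ℕ∞) Tr (Icc 0 ℓ))
    (hr : ContDiffOn ℝ (⊤ : ℕ∞) r (Icc 0 ℓ))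
    (hρAb : ∀ x ∈ Icc (0:ℝ) ℓ, ρ₀ ≤ ρA x)
    (hμb : ∀ x ∈ Icc (0:ℝ) ℓ, 0 ≤ μ x)
    (hTrb : ∀ x ∈ Icc (0:ℝ) ℓ, 0 ≤ Tr x)
    (hrb : ∀ x ∈ Icc (0:ℝ) ℓ, r₀ ≤ r x)
    (hκb : ∀ x ∈ Icc (0:ℝ) ℓ, κ₀ ≤ κ x)
    (hF : ContinuousOn (fun p : ℝ × ℝ => F p.1 p.2) (Icc 0 ℓ ×ˢ Icc 0 T))
    (sol : ForwardSol ℓ T ρA μ Tr r κ F) :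
    (∀ t ∈ Icc (0:ℝ) T,
      (∫ τ in (0:ℝ)..t, ∫ x in (0:ℝ)..ℓ, (sol.ut x τ) ^ 2)
        ≤ (Real.exp (t / ρ₀) - 1) * (∫ t in (0:ℝ)..T, ∫ x in (0:ℝ)..ℓ, (F x t) ^ 2)) ∧
    (∫ t in (0:ℝ)..T, ∫ x in (0:ℝ)..ℓ, (sol.ut x t) ^ 2)
        ≤ (Real.exp (T / ρ₀) - 1) * (∫ t in (0:ℝ)..T, ∫ x in (0:ℝ)..ℓ, (F x t) ^ 2) := by
  have hvelocity (τ : ℝ) (hτ : τ ∈ Icc 0 T) :=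
    sol.integral_ut_sq_le hℓ.le hρ₀ hρA.continuousOn hTr.continuousOn hr.continuousOn hρAb hμb
      hTrb (fun x hx => hr₀.le.trans (hrb x hx)) (fun x hx => hκ₀.le.trans (hκb x hx)) hF hτ
  have hcont : ContinuousOn (fun τ => ∫ x in 0..ℓ, sol.ut x τ ^ 2) (Icc 0 T) :=
    (sol.cont_ut.pow 2).continuousOn_intervalIntegral_of_prod hℓ.le
  have hintegral (t : ℝ) (ht : t ∈ Icc 0 T) : ∫ τ in 0..t, ∫ x in 0..ℓ, sol.ut x τ ^ 2 ≤
      (exp (t / ρ₀) - 1) * ∫ s in 0..T, ∫ x in 0..ℓ, F x s ^ 2 :=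
    calc _ ≤ ∫ τ in 0..t, exp (τ / ρ₀) / ρ₀ * ∫ s in 0..T, ∫ x in 0..ℓ, F x s ^ 2 :=
          intervalIntegral.integral_mono_on ht.1
            ((hcont.mono (Icc_subset_Icc_right ht.2)).intervalIntegrable_of_Icc ht.1)
            ((by fun_prop : Continuous fun τ => exp (τ / ρ₀) / ρ₀ * _).intervalIntegrable _ _)
            fun τ hτ => hvelocity τ ⟨hτ.1, hτ.2.trans ht.2⟩
      _ = _ := by
          rw [intervalIntegral.integral_mul_const, integral_exp_div_div hρ₀.ne', zero_div, exp_zero]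
  exact ⟨hintegral, hintegral T ⟨hT.le, le_rfl⟩⟩

/-- **Estimate (10) and the second estimate of Theorem 1.** -/
theorem velocity_L2_estimate
    (ℓ T ρ₀ r₀ κ₀ : ℝ) (hℓ : 0 < ℓ) (hT : 0 < T)
    (hρ₀ : 0 < ρ₀) (hr₀ : 0 < r₀) (hκ₀ : 0 < κ₀)
    (ρA μ Tr r κ : ℝ → ℝ) (F : ℝ → ℝ → ℝ)
    (hρA : ContDiffOn ℝ (⊤ : ℕ∞) ρA (Icc 0 ℓ))
    (hμ : ContDiffOn ℝ (⊤ : ℕ∞) μ (Icc 0 ℓ))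
    (hTr : ContDiffOn ℝ (⊤ : ℕ∞) Tr (Icc 0 ℓ))
    (hr : ContDiffOn ℝ (⊤ : ℕ∞) r (Icc 0 ℓ))
    (hκ : ContDiffOn ℝ (⊤ : ℕ∞) κ (Icc 0 ℓ))
    (hρAb : ∀ x ∈ Icc (0:ℝ) ℓ, ρ₀ ≤ ρA x)
    (hμb : ∀ x ∈ Icc (0:ℝ) ℓ, 0 ≤ μ x)
    (hTrb : ∀ x ∈ Icc (0:ℝ) ℓ, 0 ≤ Tr x)
    (hrb : ∀ x ∈ Icc (0:ℝ) ℓ, r₀ ≤ r x)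
    (hκb : ∀ x ∈ Icc (0:ℝ) ℓ, κ₀ ≤ κ x)
    (hF : ContinuousOn (fun p : ℝ × ℝ => F p.1 p.2) (Icc 0 ℓ ×ˢ Icc 0 T))
    (sol : ForwardSol ℓ T ρA μ Tr r κ F) :
    (∀ t ∈ Icc (0:ℝ) T,
      (∫ τ in (0:ℝ)..t, ∫ x in (0:ℝ)..ℓ, (sol.ut x τ) ^ 2)
        ≤ (Real.exp (t / ρ₀) - 1) * (∫ t in (0:ℝ)..T, ∫ x in (0:ℝ)..ℓ, (F x t) ^ 2)) ∧
    (∫ t in (0:ℝ)..T, ∫ x in (0:ℝ)..ℓ, (sol.ut x t) ^ 2)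
        ≤ (Real.exp (T / ρ₀) - 1) * (∫ t in (0:ℝ)..T, ∫ x in (0:ℝ)..ℓ, (F x t) ^ 2) :=
  velocity_L2_estimate_general ℓ T ρ₀ r₀ κ₀ hℓ hT hρ₀ hr₀ hκ₀ ρA μ Tr r κ F hρA hTr hr hρAb hμb hTrb
    hrb hκb hF sol
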